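/- If persistence diagrams D₁ and D₂ are orthogonal, then for p ≥ 1 the p-Wasserstein distance satisfies W_p(D₁, D₂)^p = W_p(D₁, ∅)^p + W_p(D₂, ∅)^p. -/

import Mathlib

open MeasureTheory Filter

noncomputable section

/-- `D` is a persistence diagram: every feature is born before it dies. -/
def IsDiagram (D : Multiset (ℝ × ℝ)) : Prop := ∀ p ∈ D, p.1 < p.2

/-- Supremum norm distance on ℝ². -/
def distSup (x y : ℝ × ℝ) : ℝ := max |x.1 - y.1| |x.2 - y.2|

/-- `M` is a matching between `D₁` and `D₂`: a bijective pairing between the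
diagrams augmented with finitely many diagonal points. -/
def IsMatching (D₁ D₂ : Multiset (ℝ × ℝ)) (M : Multiset ((ℝ × ℝ) × (ℝ × ℝ))) : Prop :=
  ∃ E₁ E₂ : Multiset (ℝ × ℝ), (∀ x ∈ E₁, x.1 = x.2) ∧ (∀ y ∈ E₂, y.1 = y.2) ∧
    M.map Prod.fst = D₁ + E₁ ∧ M.map Prod.snd = D₂ + E₂

/-- The bottleneck cost of a matching: the largest sup-norm distance within a pair. -/
def costSup (M : Multiset ((ℝ × ℝ) × (ℝ × ℝ))) : ℝ :=
  sSup (insert 0 {c | ∃ pr ∈ M, c = distSup pr.1 pr.2})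

/-- Bottleneck distance between persistence diagrams. -/
def bottleneck (D₁ D₂ : Multiset (ℝ × ℝ)) : ℝ :=
  sInf {c | ∃ M, IsMatching D₁ D₂ M ∧ c = costSup M}

/-- `p`-Wasserstein distance between persistence diagrams. -/
def wasserstein (p : ℝ) (D₁ D₂ : Multiset (ℝ × ℝ)) : ℝ :=
  sInf {c | ∃ M, IsMatching D₁ D₂ M ∧
    c = ((M.map fun pr => distSup pr.1 pr.2 ^ p).sum) ^ (1 / p)}

/-- The trivial matching: each point of either diagram is paired with its closest
diagonal point. -/
def trivMatch (D₁ D₂ : Multiset (ℝ × ℝ)) : Multiset ((ℝ × ℝ) × (ℝ × ℝ)) :=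
  (D₁.map fun x => (x, ((x.1 + x.2) / 2, (x.1 + x.2) / 2))) +
  (D₂.map fun y => (((y.1 + y.2) / 2, (y.1 + y.2) / 2), y))

/-!
Orthogonality makes the trivial matching, which sends every point to its nearest diagonal
point, optimal. If the open intervals of `x` and `y` are disjoint, the sup-norm distance
between them is at least the sum of their half-persistences, and `t ↦ t ^ p` is superadditive
on `[0, ∞)` for `p ≥ 1`; so a pair `(x, y)` of any matching costs at least as much as sending
`x` and `y` to the diagonal separately. Diagonal points have empty intervals and zero
half-persistence, so they fit the same estimate.
-/

open Set

def totalPersistence (p : ℝ) (D : Multiset (ℝ × ℝ)) : ℝ :=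
  (D.map fun x => ((x.2 - x.1) / 2) ^ p).sum

def matchingCost (p : ℝ) (M : Multiset ((ℝ × ℝ) × (ℝ × ℝ))) : ℝ :=
  (M.map fun pr => distSup pr.1 pr.2 ^ p).sum

def Orthogonal (D₁ D₂ : Multiset (ℝ × ℝ)) : Prop :=
  ∀ x ∈ D₁, ∀ y ∈ D₂, Disjoint (Ioo x.1 x.2) (Ioo y.1 y.2)

lemma distSup_comm (x y : ℝ × ℝ) : distSup x y = distSup y x := by
  simp only [distSup, abs_sub_comm]

lemma distSup_midpoint (x : ℝ × ℝ) :
    distSup x ((x.1 + x.2) / 2, (x.1 + x.2) / 2) = |x.2 - x.1| / 2 := by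
  rw [distSup, show x.1 - (x.1 + x.2) / 2 = -((x.2 - x.1) / 2) by ring,
    show x.2 - (x.1 + x.2) / 2 = (x.2 - x.1) / 2 by ring, abs_neg, max_self, abs_div,
    abs_two]

lemma half_add_half_le_distSup {x y : ℝ × ℝ} (h : Disjoint (Ioo x.1 x.2) (Ioo y.1 y.2)) :
    (x.2 - x.1) / 2 + (y.2 - y.1) / 2 ≤ distSup x y := by
  rw [Ioo_disjoint_Ioo] at h
  have h₁ := le_trans (neg_le_abs _) (le_max_left |x.1 - y.1| |x.2 - y.2|)
  have h₂ := le_trans (le_abs_self _) (le_max_left |x.1 - y.1| |x.2 - y.2|)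
  have h₃ := le_trans (neg_le_abs _) (le_max_right |x.1 - y.1| |x.2 - y.2|)
  have h₄ := le_trans (le_abs_self _) (le_max_right |x.1 - y.1| |x.2 - y.2|)
  simp only [distSup]
  rcases min_choice x.2 y.2 with hmin | hmin <;> rcases max_choice x.1 y.1 with hmax | hmax <;>
    rw [hmin, hmax] at h <;> linarith

lemma rpow_half_add_rpow_half_le_distSup_rpow {p : ℝ} (hp : 1 ≤ p) {x y : ℝ × ℝ}
    (hx : x.1 ≤ x.2) (hy : y.1 ≤ y.2) (h : Disjoint (Ioo x.1 x.2) (Ioo y.1 y.2)) :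
    ((x.2 - x.1) / 2) ^ p + ((y.2 - y.1) / 2) ^ p ≤ distSup x y ^ p :=
  (Real.add_rpow_le_rpow_add (by linarith) (by linarith) hp).trans
    (Real.rpow_le_rpow (by linarith) (half_add_half_le_distSup h) (by linarith))

lemma IsDiagram.le_of_mem_add {D E : Multiset (ℝ × ℝ)} (hD : IsDiagram D)
    (hE : ∀ x ∈ E, x.1 = x.2) {x : ℝ × ℝ} (hx : x ∈ D + E) : x.1 ≤ x.2 := by
  rcases Multiset.mem_add.1 hx with hx | hx
  · exact (hD x hx).le
  · exact (hE x hx).le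

lemma totalPersistence_nonneg (p : ℝ) {D : Multiset (ℝ × ℝ)} (hD : IsDiagram D) :
    0 ≤ totalPersistence p D :=
  Multiset.sum_nonneg fun _ ha => by
    obtain ⟨x, hx, rfl⟩ := Multiset.mem_map.1 ha
    exact Real.rpow_nonneg (by linarith [hD x hx]) _

@[simp]
lemma totalPersistence_zero (p : ℝ) : totalPersistence p 0 = 0 := by
  simp [totalPersistence]

lemma totalPersistence_add_of_diagonal {p : ℝ} (hp : p ≠ 0) (D : Multiset (ℝ × ℝ))
    {E : Multiset (ℝ × ℝ)} (hE : ∀ x ∈ E, x.1 = x.2) :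
    totalPersistence p (D + E) = totalPersistence p D := by
  have hE₀ : totalPersistence p E = 0 := Multiset.sum_eq_zero fun _ ha => by
    obtain ⟨x, hx, rfl⟩ := Multiset.mem_map.1 ha
    simp [hE x hx, Real.zero_rpow hp]
  rw [totalPersistence, Multiset.map_add, Multiset.sum_add, ← totalPersistence,
    ← totalPersistence, hE₀, add_zero]

lemma totalPersistence_add_le_matchingCost {p : ℝ} (hp : 1 ≤ p) {D₁ D₂ : Multiset (ℝ × ℝ)}
    (hD₁ : IsDiagram D₁) (hD₂ : IsDiagram D₂) (horth : Orthogonal D₁ D₂)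
    {M : Multiset ((ℝ × ℝ) × (ℝ × ℝ))} (hM : IsMatching D₁ D₂ M) :
    totalPersistence p D₁ + totalPersistence p D₂ ≤ matchingCost p M := by
  obtain ⟨E₁, E₂, hE₁, hE₂, hM₁, hM₂⟩ := hM
  have hp₀ : p ≠ 0 := by positivity
  have hpair : ∀ pr ∈ M, ((pr.1.2 - pr.1.1) / 2) ^ p + ((pr.2.2 - pr.2.1) / 2) ^ p ≤
      distSup pr.1 pr.2 ^ p := by
    intro pr hpr
    have h₁ : pr.1 ∈ D₁ + E₁ := hM₁ ▸ Multiset.mem_map_of_mem _ hpr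
    have h₂ : pr.2 ∈ D₂ + E₂ := hM₂ ▸ Multiset.mem_map_of_mem _ hpr
    refine rpow_half_add_rpow_half_le_distSup_rpow hp (hD₁.le_of_mem_add hE₁ h₁)
      (hD₂.le_of_mem_add hE₂ h₂) ?_
    rcases Multiset.mem_add.1 h₁ with hx | hx
    · rcases Multiset.mem_add.1 h₂ with hy | hy
      · exact horth _ hx _ hy
      · simp [hE₂ _ hy]
    · simp [hE₁ _ hx]
  calc totalPersistence p D₁ + totalPersistence p D₂
      = totalPersistence p (D₁ + E₁) + totalPersistence p (D₂ + E₂) := by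
        rw [totalPersistence_add_of_diagonal hp₀ _ hE₁,
          totalPersistence_add_of_diagonal hp₀ _ hE₂]
    _ = (M.map fun pr => ((pr.1.2 - pr.1.1) / 2) ^ p + ((pr.2.2 - pr.2.1) / 2) ^ p).sum := by
        rw [← hM₁, ← hM₂, totalPersistence, totalPersistence, Multiset.map_map,
          Multiset.map_map, Multiset.sum_map_add]
        rfl
    _ ≤ matchingCost p M := Multiset.sum_map_le_sum_map _ _ hpair

lemma trivMatch_isMatching (D₁ D₂ : Multiset (ℝ × ℝ)) :
    IsMatching D₁ D₂ (trivMatch D₁ D₂) := by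
  refine ⟨D₂.map fun y => ((y.1 + y.2) / 2, (y.1 + y.2) / 2),
    D₁.map fun x => ((x.1 + x.2) / 2, (x.1 + x.2) / 2), ?_, ?_, ?_, ?_⟩
  · rintro _ hx; obtain ⟨_, _, rfl⟩ := Multiset.mem_map.1 hx; rfl
  · rintro _ hx; obtain ⟨_, _, rfl⟩ := Multiset.mem_map.1 hx; rfl
  · simp [trivMatch, Multiset.map_map]
  · simp [trivMatch, Multiset.map_map, add_comm]

lemma matchingCost_trivMatch (p : ℝ) {D₁ D₂ : Multiset (ℝ × ℝ)}
    (hD₁ : IsDiagram D₁) (hD₂ : IsDiagram D₂) :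
    matchingCost p (trivMatch D₁ D₂) = totalPersistence p D₁ + totalPersistence p D₂ := by
  have hcost : ∀ x : ℝ × ℝ, x.1 < x.2 →
      distSup x ((x.1 + x.2) / 2, (x.1 + x.2) / 2) = (x.2 - x.1) / 2 := fun x hx => by
    rw [distSup_midpoint, abs_of_pos (sub_pos.2 hx)]
  rw [matchingCost, trivMatch, Multiset.map_add, Multiset.sum_add, Multiset.map_map,
    Multiset.map_map]
  congr 2
  · exact Multiset.map_congr rfl fun x hx => by simp [hcost x (hD₁ x hx)]
  · exact Multiset.map_congr rfl fun y hy => by simp [distSup_comm, hcost y (hD₂ y hy)]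

lemma wasserstein_eq_of_orthogonal {p : ℝ} (hp : 1 ≤ p) {D₁ D₂ : Multiset (ℝ × ℝ)}
    (hD₁ : IsDiagram D₁) (hD₂ : IsDiagram D₂) (horth : Orthogonal D₁ D₂) :
    wasserstein p D₁ D₂ = (totalPersistence p D₁ + totalPersistence p D₂) ^ (1 / p) := by
  refine IsLeast.csInf_eq ⟨⟨trivMatch D₁ D₂, trivMatch_isMatching D₁ D₂, ?_⟩, ?_⟩
  · rw [← matchingCost, matchingCost_trivMatch p hD₁ hD₂]
  · rintro c ⟨M, hM, rfl⟩
    exact Real.rpow_le_rpow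
      (add_nonneg (totalPersistence_nonneg p hD₁) (totalPersistence_nonneg p hD₂))
      (totalPersistence_add_le_matchingCost hp hD₁ hD₂ horth hM) (by positivity)

lemma wasserstein_rpow_eq_of_orthogonal {p : ℝ} (hp : 1 ≤ p) {D₁ D₂ : Multiset (ℝ × ℝ)}
    (hD₁ : IsDiagram D₁) (hD₂ : IsDiagram D₂) (horth : Orthogonal D₁ D₂) :
    wasserstein p D₁ D₂ ^ p = totalPersistence p D₁ + totalPersistence p D₂ := by
  rw [wasserstein_eq_of_orthogonal hp hD₁ hD₂ horth, one_div,
    Real.rpow_inv_rpow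
      (add_nonneg (totalPersistence_nonneg p hD₁) (totalPersistence_nonneg p hD₂))
      (by positivity)]

lemma wasserstein_zero_rpow {p : ℝ} (hp : 1 ≤ p) {D : Multiset (ℝ × ℝ)} (hD : IsDiagram D) :
    wasserstein p D 0 ^ p = totalPersistence p D := by
  rw [wasserstein_rpow_eq_of_orthogonal hp hD (by simp [IsDiagram]) (by simp [Orthogonal]),
    totalPersistence_zero, add_zero]

theorem wasserstein_pow_of_orthogonal
    (D₁ D₂ : Multiset (ℝ × ℝ)) (hD₁ : IsDiagram D₁) (hD₂ : IsDiagram D₂)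
    (horth : ∀ p₁ ∈ D₁, ∀ p₂ ∈ D₂, Set.Ioo p₁.1 p₁.2 ∩ Set.Ioo p₂.1 p₂.2 = ∅)
    (p : ℝ) (hp : 1 ≤ p) :
    wasserstein p D₁ D₂ ^ p = wasserstein p D₁ 0 ^ p + wasserstein p D₂ 0 ^ p := by
  have horth' : Orthogonal D₁ D₂ := fun x hx y hy =>
    disjoint_iff_inter_eq_empty.2 (horth x hx y hy)
  rw [wasserstein_rpow_eq_of_orthogonal hp hD₁ hD₂ horth', wasserstein_zero_rpow hp hD₁,
    wasserstein_zero_rpow hp hD₂]
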